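/- Let (X, 𝒰) be a uniform space and f : X → X continuous. Then f is weakly mixing (f × f is transitive on X × X) if and only if the Zadeh extension f̂ : (ℱ(X), 𝒰_∞) → (ℱ(X), 𝒰_∞) is topologically transitive. -/

import Mathlib

open Set Filter Topology
open scoped Uniformity

/-- The α-cut of a fuzzy set: `{x | α ≤ u x}` for `α ≠ 0`, and the support
(closure of `{x | 0 < u x}`) for `α = 0`. -/
noncomputable def fuzzyCut {X : Type*} [TopologicalSpace X] (u : X → ℝ) (α : ℝ) : Set X :=
  if α = 0 then closure {x | 0 < u x} else {x | α ≤ u x}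

/-- `u` belongs to `ℱ(X)`: a normal upper semicontinuous `[0,1]`-valued fuzzy set
with compact support. -/
structure IsFuzzySet {X : Type*} [TopologicalSpace X] (u : X → ℝ) : Prop where
  mem_Icc : ∀ x, u x ∈ Set.Icc (0:ℝ) 1
  usc : UpperSemicontinuous u
  normal : ∃ x, u x = 1
  compact_supp : IsCompact (closure {x | 0 < u x})

/-- The Zadeh extension of `f`: `x ↦ sup {u z : f z = x}` (and `0` when the
preimage is empty, since `sSup ∅ = 0` in `ℝ`). -/
noncomputable def zadeh {X : Type*} (f : X → X) (u : X → ℝ) : X → ℝ :=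
  fun x => sSup (u '' (f ⁻¹' {x}))

/-- `W(A) = ⋃ a ∈ A, W(a)` where `W(a) = {y | (a, y) ∈ W}`. -/
def ballImage {Y : Type*} (W : Set (Y × Y)) (A : Set Y) : Set Y :=
  {y | ∃ a ∈ A, (a, y) ∈ W}

/-- The Hausdorff entourage relation `𝒦[W]`: `(A,B) ∈ 𝒦[W]` iff `A ⊆ W(B)` and `B ⊆ W(A)`. -/
def KRel {Y : Type*} (W : Set (Y × Y)) (A B : Set Y) : Prop :=
  A ⊆ ballImage W B ∧ B ⊆ ballImage W A

/-- The level-wise entourage relation `ℱ[W]`: `(u_α, v_α) ∈ 𝒦[W]` for all `α ∈ [0,1]`. -/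
def FRel {X : Type*} [TopologicalSpace X] (W : Set (X × X)) (u v : X → ℝ) : Prop :=
  ∀ α ∈ Set.Icc (0:ℝ) 1, KRel W (fuzzyCut u α) (fuzzyCut v α)

/-- The Skorokhod entourage relation `G[W, ε]`: there is an increasing homeomorphism `t`
of `[0,1]` with `‖t‖ < ε` and `(u_α, v_{t α}) ∈ 𝒦[W]` for all `α ∈ [0,1]`. -/
def SkoRel {X : Type*} [TopologicalSpace X] (W : Set (X × X)) (ε : ℝ) (u v : X → ℝ) : Prop :=
  ∃ t : ℝ → ℝ, StrictMonoOn t (Set.Icc 0 1) ∧ t 0 = 0 ∧ t 1 = 1 ∧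
    Set.MapsTo t (Set.Icc 0 1) (Set.Icc 0 1) ∧ Set.SurjOn t (Set.Icc 0 1) (Set.Icc 0 1) ∧
    (∀ α ∈ Set.Icc (0:ℝ) 1, |t α - α| < ε) ∧
    (∀ α ∈ Set.Icc (0:ℝ) 1, KRel W (fuzzyCut u α) (fuzzyCut v (t α)))

/-- The sendograph of `u`: `end(u) ∩ (u₀ × [0,1])`. -/
noncomputable def send {X : Type*} [TopologicalSpace X] (u : X → ℝ) : Set (X × ℝ) :=
  {p | p.1 ∈ fuzzyCut u 0 ∧ p.2 ∈ Set.Icc (0:ℝ) 1 ∧ p.2 ≤ u p.1}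

/-- The product entourage `U × V_ε` on `X × [0,1]`. -/
def prodEnt {X : Type*} (U : Set (X × X)) (ε : ℝ) : Set ((X × ℝ) × (X × ℝ)) :=
  {p | (p.1.1, p.2.1) ∈ U ∧ |p.1.2 - p.2.2| < ε}

/-- The sendograph entourage relation `S[U, ε]`. -/
noncomputable def SendRel {X : Type*} [TopologicalSpace X] (U : Set (X × X)) (ε : ℝ)
    (u v : X → ℝ) : Prop :=
  KRel (prodEnt U ε) (send u) (send v)

/-- `u_{α⁺} = closure (⋃ β ∈ (α, 1], u_β)`, the right limit of the level map. -/
noncomputable def cutPlus {X : Type*} [TopologicalSpace X] (u : X → ℝ) (α : ℝ) : Set X :=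
  closure (⋃ β ∈ Set.Ioc α 1, fuzzyCut u β)

/-- `B` belongs to the Vietoris basic open set `⟨V 0, …, V (k-1)⟩`. -/
def inVietoris {Y : Type*} (B : Set Y) (k : ℕ) (V : Fin k → Set Y) : Prop :=
  B ⊆ (⋃ i, V i) ∧ ∀ i, (B ∩ V i).Nonempty

/-!
Weak mixing gives, by Furstenberg's intersection lemma, one time `n` at which `f^[n]` moves each
of finitely many nonempty open sets to meet a prescribed open set. A fuzzy set `u` is
approximated at all positive levels at once by finitely many points carrying levels: upper
semicontinuity and compactness of the support let a compactness argument over `[0, 1]` choose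
them. Points near the net of `u` that `f^[n]` sends near the net of `v`, with the smaller of the
two levels, form a fuzzy set `w` close to `u` whose Zadeh image is close to `v`, because
`(zadeh f)^[n] = zadeh f^[n]`. Conversely, testing the Zadeh extension on a crisp point and a
crisp pair of points shows that one iterate of an open set meets two given open sets, and this
already forces `f × f` to be transitive.
-/

open UniformSpace
open scoped SetRel

section Uniform

variable {X : Type*} [UniformSpace X]

lemma exists_isOpen_isSymm_comp_comp_subset {U : Set (X × X)} (hU : U ∈ 𝓤 X) :
    ∃ W ∈ 𝓤 X, IsOpen W ∧ SetRel.IsSymm W ∧ W ○ W ○ W ⊆ U := by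
  obtain ⟨t, ht, -, htU⟩ := comp_comp_symm_mem_uniformity_sets hU
  obtain ⟨W, ⟨hW, hWo, hWs⟩, hWt⟩ := uniformity_hasBasis_open_symmetric.mem_iff.mp ht
  exact ⟨W, hW, hWo, hWs, (SetRel.comp_subset_comp (SetRel.comp_subset_comp hWt hWt) hWt).trans htU⟩

lemma exists_mem_rel_of_mem_closure {W : Set (X × X)} (hW : W ∈ 𝓤 X) {A : Set X} {x : X}
    (hx : x ∈ closure A) : ∃ a ∈ A, (a, x) ∈ W := by
  obtain ⟨a, haW, ha⟩ := mem_closure_iff_nhds.mp hx _ (mem_nhds_right x hW)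
  exact ⟨a, ha, haW⟩

lemma mem_rel_of_mem_closure_singleton {W : Set (X × X)} (hW : W ∈ 𝓤 X) {a x : X}
    (hx : x ∈ closure {a}) : (a, x) ∈ W := by
  obtain ⟨_, rfl, h⟩ := exists_mem_rel_of_mem_closure hW hx
  exact h

end Uniform

lemma ballImage_mono {Y : Type*} {W W' : Set (Y × Y)} (hW : W ⊆ W') {A B : Set Y}
    (hAB : A ⊆ B) : ballImage W A ⊆ ballImage W' B :=
  fun _ ⟨a, ha, haW⟩ => ⟨a, hAB ha, hW haW⟩

lemma KRel.mono {Y : Type*} {W W' : Set (Y × Y)} {A B : Set Y} (h : KRel W A B)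
    (hW : W ⊆ W') : KRel W' A B :=
  ⟨h.1.trans (ballImage_mono hW subset_rfl), h.2.trans (ballImage_mono hW subset_rfl)⟩

lemma FRel.mono {X : Type*} [TopologicalSpace X] {W W' : Set (X × X)} {u v : X → ℝ}
    (h : FRel W u v) (hW : W ⊆ W') : FRel W' u v :=
  fun α hα => (h α hα).mono hW

lemma fuzzyCut_zero {X : Type*} [TopologicalSpace X] (u : X → ℝ) :
    fuzzyCut u 0 = closure {x | 0 < u x} :=
  if_pos rfl

lemma fuzzyCut_of_ne_zero {X : Type*} [TopologicalSpace X] (u : X → ℝ) {α : ℝ} (hα : α ≠ 0) :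
    fuzzyCut u α = {x | α ≤ u x} :=
  if_neg hα

section LevelRel

variable {X : Type*} [UniformSpace X] {u w : X → ℝ} {R W : Set (X × X)}

lemma closure_pos_subset_ballImage (hW : W ∈ 𝓤 X)
    (h : ∀ α > 0, {x | α ≤ u x} ⊆ ballImage R {x | α ≤ w x}) :
    closure {x | 0 < u x} ⊆ ballImage (R ○ W) (closure {x | 0 < w x}) := by
  intro x hx
  obtain ⟨y, hy, hyx⟩ := exists_mem_rel_of_mem_closure hW hx
  obtain ⟨a, ha, hay⟩ := h (u y) hy (show u y ≤ u y from le_rfl)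
  exact ⟨a, subset_closure (show 0 < w a from hy.trans_le ha), y, hay, hyx⟩

lemma fRel_of_forall_pos (hW : W ∈ 𝓤 X) (h : ∀ α > 0, KRel R {x | α ≤ u x} {x | α ≤ w x}) :
    FRel (R ○ W) u w := by
  have := isRefl_of_mem_uniformity hW
  intro α hα
  rcases hα.1.eq_or_lt with rfl | hα0
  · rw [fuzzyCut_zero, fuzzyCut_zero]
    exact ⟨closure_pos_subset_ballImage hW fun α hα => (h α hα).1,
      closure_pos_subset_ballImage hW fun α hα => (h α hα).2⟩
  · rw [fuzzyCut_of_ne_zero u hα0.ne', fuzzyCut_of_ne_zero w hα0.ne']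
    exact (h α hα0).mono SetRel.left_subset_comp

end LevelRel

section Zadeh

variable {X : Type*} {f g : X → X} {u : X → ℝ}

lemma le_zadeh_apply (hb : BddAbove (range u)) (x : X) : u x ≤ zadeh g u (g x) :=
  le_csSup (hb.mono (image_subset_range _ _)) ⟨x, rfl, rfl⟩

lemma zadeh_nonneg (h0 : ∀ x, 0 ≤ u x) (y : X) : 0 ≤ zadeh g u y :=
  Real.sSup_nonneg (by rintro _ ⟨x, -, rfl⟩; exact h0 x)

lemma bddAbove_range_zadeh (hb : BddAbove (range u)) : BddAbove (range (zadeh g u)) := by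
  obtain ⟨M, hM⟩ := hb
  refine ⟨max M 0, ?_⟩
  rintro _ ⟨y, rfl⟩
  exact Real.sSup_le (by rintro _ ⟨x, -, rfl⟩; exact (hM ⟨x, rfl⟩).trans (le_max_left _ _))
    (le_max_right _ _)

lemma zadeh_comp (h0 : ∀ x, 0 ≤ u x) (hb : BddAbove (range u)) :
    zadeh f (zadeh g u) = zadeh (f ∘ g) u := by
  ext y
  apply le_antisymm
  · refine Real.sSup_le ?_ (zadeh_nonneg h0 y)
    rintro _ ⟨z, hz, rfl⟩
    refine Real.sSup_le ?_ (zadeh_nonneg h0 y)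
    rintro _ ⟨x, hx, rfl⟩
    refine le_csSup (hb.mono (image_subset_range _ _)) ⟨x, ?_, rfl⟩
    simp_all
  · refine Real.sSup_le ?_ (zadeh_nonneg (zadeh_nonneg h0) y)
    rintro _ ⟨x, hx, rfl⟩
    exact (le_zadeh_apply hb x).trans
      (le_csSup ((bddAbove_range_zadeh hb).mono (image_subset_range _ _)) ⟨g x, hx, rfl⟩)

lemma zadeh_iterate (h0 : ∀ x, 0 ≤ u x) (hb : BddAbove (range u)) (n : ℕ) :
    (zadeh f)^[n] u = zadeh f^[n] u := by
  induction n with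
  | zero =>
    ext x
    simp [zadeh]
  | succ n ih => rw [Function.iterate_succ_apply', ih, zadeh_comp h0 hb, Function.iterate_succ']

lemma exists_lt_of_lt_zadeh {β : ℝ} {y : X} (hβ : 0 ≤ β) (h : β < zadeh g u y) :
    ∃ x, g x = y ∧ β < u x := by
  have hne : (u '' (g ⁻¹' {y})).Nonempty := by
    by_contra hempty
    rw [not_nonempty_iff_eq_empty] at hempty
    simp only [zadeh, hempty, Real.sSup_empty] at h
    linarith
  obtain ⟨_, ⟨x, hx, rfl⟩, hβx⟩ := exists_lt_of_lt_csSup hne h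
  exact ⟨x, hx, hβx⟩

lemma exists_le_of_le_zadeh (hfin : (range u).Finite) {γ : ℝ} {y : X} (hγ : 0 < γ)
    (h : γ ≤ zadeh g u y) : ∃ x, g x = y ∧ γ ≤ u x := by
  obtain ⟨x, hx, -⟩ := exists_lt_of_lt_zadeh le_rfl (hγ.trans_le h)
  obtain ⟨x', hx', hmax⟩ : sSup (u '' (g ⁻¹' {y})) ∈ u '' (g ⁻¹' {y}) :=
    Nonempty.csSup_mem ⟨u x, x, hx, rfl⟩ (hfin.subset (image_subset_range _ _))
  exact ⟨x', hx', hmax ▸ h⟩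

end Zadeh

/-- Closures of points rather than points keep this upper semicontinuous without any separation
axiom. -/
noncomputable def simpleFuzzy {X ι : Type*} [TopologicalSpace X] (z : ι → X) (ℓ : ι → ℝ) :
    X → ℝ :=
  fun x => ⨆ i, (closure {z i}).indicator (fun _ => ℓ i) x

section SimpleFuzzy

variable {X ι : Type*} [TopologicalSpace X] [Finite ι] {z : ι → X} {ℓ : ι → ℝ}

lemma simpleFuzzy_eq_zero_or (x : X) :
    simpleFuzzy z ℓ x = 0 ∨ ∃ i, x ∈ closure {z i} ∧ simpleFuzzy z ℓ x = ℓ i := by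
  rcases isEmpty_or_nonempty ι with hι | hι
  · exact Or.inl (Real.iSup_of_isEmpty _)
  obtain ⟨i, hi⟩ := exists_eq_ciSup_of_finite
    (f := fun i => (closure {z i}).indicator (fun _ => ℓ i) x)
  simp only [simpleFuzzy, ← hi]
  by_cases hx : x ∈ closure {z i}
  · exact Or.inr ⟨i, hx, indicator_of_mem hx _⟩
  · exact Or.inl (indicator_of_notMem hx _)

lemma le_simpleFuzzy_of_mem_closure {x : X} {i : ι} (hx : x ∈ closure {z i}) :
    ℓ i ≤ simpleFuzzy z ℓ x :=
  calc ℓ i = (closure {z i}).indicator (fun _ => ℓ i) x := (indicator_of_mem hx (fun _ => ℓ i)).symm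
    _ ≤ simpleFuzzy z ℓ x := le_ciSup (f := fun i => (closure {z i}).indicator (fun _ => ℓ i) x)
        (Finite.bddAbove_range _) i

lemma le_simpleFuzzy_iff {γ : ℝ} (hγ : 0 < γ) {x : X} :
    γ ≤ simpleFuzzy z ℓ x ↔ ∃ i, γ ≤ ℓ i ∧ x ∈ closure {z i} := by
  refine ⟨fun h => ?_, fun ⟨i, hi, hx⟩ => hi.trans (le_simpleFuzzy_of_mem_closure hx)⟩
  rcases simpleFuzzy_eq_zero_or (z := z) (ℓ := ℓ) x with h0 | ⟨i, hx, hi⟩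
  · linarith
  · exact ⟨i, hi ▸ h, hx⟩

lemma finite_range_simpleFuzzy : (range (simpleFuzzy z ℓ)).Finite := by
  refine ((finite_range ℓ).insert 0).subset ?_
  rintro _ ⟨x, rfl⟩
  rcases simpleFuzzy_eq_zero_or (z := z) (ℓ := ℓ) x with h | ⟨i, -, h⟩
  · exact Or.inl h
  · exact Or.inr ⟨i, h.symm⟩

lemma isFuzzySet_simpleFuzzy [R0Space X] (hℓ : ∀ i, ℓ i ∈ Ioc 0 1) (h1 : ∃ i, ℓ i = 1) :
    IsFuzzySet (simpleFuzzy z ℓ) := by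
  have hIcc : ∀ x, simpleFuzzy z ℓ x ∈ Icc 0 1 := fun x => by
    rcases simpleFuzzy_eq_zero_or (z := z) (ℓ := ℓ) x with h | ⟨i, -, h⟩
    · simp [h]
    · exact h ▸ Ioc_subset_Icc_self (hℓ i)
  have hsupp : {x | 0 < simpleFuzzy z ℓ x} = ⋃ i, closure {z i} := by
    ext x
    simp only [mem_ofPred_eq, mem_iUnion]
    constructor
    · intro hx
      rcases simpleFuzzy_eq_zero_or (z := z) (ℓ := ℓ) x with h | ⟨i, hxi, -⟩
      · exact absurd h hx.ne'
      · exact ⟨i, hxi⟩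
    · rintro ⟨i, hxi⟩
      exact (hℓ i).1.trans_le (le_simpleFuzzy_of_mem_closure hxi)
  refine ⟨hIcc, ?_, ?_, ?_⟩
  · refine upperSemicontinuous_iff_isClosed_preimage.2 fun γ => ?_
    rcases le_or_gt γ 0 with hγ | hγ
    · convert isClosed_univ
      exact eq_univ_of_forall fun x => hγ.trans (hIcc x).1
    · convert isClosed_iUnion_of_finite fun i =>
        (isClosed_closure (s := {z i})).inter (isClosed_const (p := γ ≤ ℓ i))
      ext x
      simp only [mem_preimage, mem_Ici, le_simpleFuzzy_iff hγ, mem_iUnion, mem_inter_iff,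
        mem_ofPred_eq, and_comm]
  · obtain ⟨i, hi⟩ := h1
    exact ⟨z i, le_antisymm (hIcc _).2
      (hi ▸ le_simpleFuzzy_of_mem_closure (subset_closure rfl))⟩
  · rw [hsupp, (isClosed_iUnion_of_finite fun _ => isClosed_closure).closure_eq]
    exact isCompact_iUnion fun _ => isCompact_closure_singleton

end SimpleFuzzy

lemma UpperSemicontinuous.exists_lt_forall_le_of_isCompact {X : Type*} [TopologicalSpace X]
    {u : X → ℝ} (hu : UpperSemicontinuous u) {C : Set X} (hC : IsCompact C) {t : ℝ}
    (h : ∀ x ∈ C, u x < t) : ∃ β < t, ∀ x ∈ C, u x ≤ β := by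
  rcases C.eq_empty_or_nonempty with rfl | hne
  · exact ⟨t - 1, by linarith, by simp⟩
  · obtain ⟨c, hc, hmax⟩ := (hu.upperSemicontinuousOn C).exists_isMaxOn hne hC
    exact ⟨u c, h c hc, hmax⟩

def CutCovers {X : Type*} (W : Set (X × X)) (u : X → ℝ) (P : Finset X) (γ : ℝ) : Prop :=
  {x | γ ≤ u x} ⊆ ballImage W {p | p ∈ P ∧ γ ≤ u p}

lemma CutCovers.mono {X : Type*} {W : Set (X × X)} {u : X → ℝ} {P Q : Finset X} {γ : ℝ}
    (h : CutCovers W u P γ) (hPQ : P ⊆ Q) : CutCovers W u Q γ :=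
  h.trans (ballImage_mono subset_rfl fun _ hp => ⟨hPQ hp.1, hp.2⟩)

section CutCovers

variable {X : Type*} [UniformSpace X] {u : X → ℝ} {W : Set (X × X)}
  (hcomp : IsCompact (closure {x | 0 < u x})) (hW : W ∈ 𝓤 X) (hWo : IsOpen W)
include hcomp hW hWo

lemma exists_eventually_cutCovers_of_lt {t : ℝ} (ht : 0 ≤ t) :
    ∃ P : Finset X, (∀ p ∈ P, t < u p) ∧ ∀ᶠ γ in 𝓝 t, t < γ → CutCovers W u P γ := by
  set D := {x | t < u x}
  have hD : IsCompact (closure D) := hcomp.of_isClosed_subset isClosed_closure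
    (closure_mono fun x (hx : t < u x) => show 0 < u x from ht.trans_lt hx)
  have hcover : closure D ⊆ ⋃ d ∈ D, ball d W := fun y hy => by
    obtain ⟨d, hd, hdy⟩ := exists_mem_rel_of_mem_closure hW hy
    exact mem_biUnion hd hdy
  obtain ⟨P, hPD, hPfin, hPcover⟩ :=
    hD.elim_finite_subcover_image (fun d _ => isOpen_ball d hWo) hcover
  refine ⟨hPfin.toFinset, fun p hp => hPD (hPfin.mem_toFinset.1 hp), ?_⟩
  filter_upwards [(eventually_all_finset _).2 fun p hp => eventually_lt_nhds (hPD
    (hPfin.mem_toFinset.1 hp) : t < u p)] with γ hγ htγ x hx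
  obtain ⟨p, hp, hxp⟩ := mem_iUnion₂.1 (hPcover (subset_closure (htγ.trans_le hx : t < u x)))
  exact ⟨p, ⟨hPfin.mem_toFinset.2 hp, (hγ p (hPfin.mem_toFinset.2 hp)).le⟩, hxp⟩

/-- The part of the support outside a neighbourhood of the `t`-cut is compact, so `u` stays
below some `β < t` there. -/
lemma exists_eventually_cutCovers_of_pos (husc : UpperSemicontinuous u) {t : ℝ} (ht : 0 < t) :
    ∃ P : Finset X, (∀ p ∈ P, t ≤ u p) ∧
      ∀ᶠ γ in 𝓝 t, 0 < γ → γ ≤ t → CutCovers W u P γ := by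
  have hK : IsCompact {x | t ≤ u x} := hcomp.of_isClosed_subset (husc.isClosed_preimage t)
    fun x (hx : t ≤ u x) => subset_closure (show 0 < u x from ht.trans_le hx)
  obtain ⟨P, hPK, hKP⟩ := hK.elim_nhds_subcover (fun x => ball x W) fun x _ => ball_mem_nhds x hW
  set G := ⋃ p ∈ P, ball p W
  have hG : IsOpen G := isOpen_biUnion fun p _ => isOpen_ball p hWo
  obtain ⟨β, hβt, hβ⟩ := husc.exists_lt_forall_le_of_isCompact (hcomp.diff hG)
    fun x hx => lt_of_not_ge fun htx => hx.2 (hKP htx)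
  refine ⟨P, hPK, ?_⟩
  filter_upwards [eventually_gt_nhds hβt] with γ hβγ hγ hγt x (hx : γ ≤ u x)
  have hxG : x ∈ G := by
    by_contra hxG
    have := hβ x ⟨subset_closure (show 0 < u x from hγ.trans_le hx), hxG⟩
    linarith
  obtain ⟨p, hp, hxp⟩ := mem_iUnion₂.1 hxG
  exact ⟨p, ⟨hp, hγt.trans (hPK p hp)⟩, hxp⟩

lemma exists_eventually_cutCovers (husc : UpperSemicontinuous u) {t : ℝ} (ht : 0 ≤ t) :
    ∃ P : Finset X, (∀ p ∈ P, 0 < u p) ∧ ∀ᶠ γ in 𝓝 t, 0 < γ → CutCovers W u P γ := by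
  classical
  obtain ⟨P, hP, hPt⟩ := exists_eventually_cutCovers_of_lt hcomp hW hWo ht
  rcases ht.eq_or_lt with rfl | ht
  · exact ⟨P, hP, hPt.mono fun γ h hγ => h hγ⟩
  obtain ⟨Q, hQ, hQt⟩ := exists_eventually_cutCovers_of_pos hcomp hW hWo husc ht
  refine ⟨P ∪ Q, ?_, ?_⟩
  · intro p hp
    rcases Finset.mem_union.1 hp with hp | hp
    · exact ht.trans (hP p hp)
    · exact ht.trans_le (hQ p hp)
  · filter_upwards [hPt, hQt] with γ hP hQ hγ
    rcases le_or_gt γ t with hγt | htγ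
    · exact (hQ hγ hγt).mono Finset.subset_union_right
    · exact (hP htγ).mono Finset.subset_union_left

lemma exists_finset_cutCovers (husc : UpperSemicontinuous u) (h1 : ∀ x, u x ≤ 1) :
    ∃ P : Finset X, (∀ p ∈ P, 0 < u p) ∧ ∀ γ > 0, CutCovers W u P γ := by
  classical
  suffices ∃ P : Finset X, (∀ p ∈ P, 0 < u p) ∧ ∀ γ ∈ Icc (0:ℝ) 1, 0 < γ → CutCovers W u P γ by
    obtain ⟨P, hP, hcov⟩ := this
    refine ⟨P, hP, fun γ hγ => ?_⟩
    rcases le_or_gt γ 1 with hγ1 | hγ1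
    · exact hcov γ ⟨hγ.le, hγ1⟩ hγ
    · intro x (hx : γ ≤ u x)
      linarith [h1 x]
  refine isCompact_Icc.induction_on ⟨∅, by simp, by simp⟩ ?_ ?_ ?_
  · rintro S T hST ⟨P, hP, hcov⟩
    exact ⟨P, hP, fun γ hγ => hcov γ (hST hγ)⟩
  · rintro S T ⟨P, hP, hPS⟩ ⟨Q, hQ, hQT⟩
    refine ⟨P ∪ Q, fun p hp => ?_, fun γ hγ hγ0 => ?_⟩
    · rcases Finset.mem_union.1 hp with hp | hp
      exacts [hP p hp, hQ p hp]
    · rcases hγ with hγ | hγ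
      · exact (hPS γ hγ hγ0).mono Finset.subset_union_left
      · exact (hQT γ hγ hγ0).mono Finset.subset_union_right
  · intro t ht
    obtain ⟨P, hP, hPt⟩ := exists_eventually_cutCovers hcomp hW hWo husc ht.1
    exact ⟨{γ | 0 < γ → CutCovers W u P γ}, mem_nhdsWithin_of_mem_nhds hPt, P, hP,
      fun γ hγ => hγ⟩

end CutCovers

lemma IsFuzzySet.bddAbove_range {X : Type*} [TopologicalSpace X] {u : X → ℝ}
    (hu : IsFuzzySet u) : BddAbove (range u) :=
  ⟨1, by rintro _ ⟨x, rfl⟩; exact (hu.mem_Icc x).2⟩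

section Approximation

variable {X : Type*} [UniformSpace X] {u s : X → ℝ} {W : Set (X × X)} [SetRel.IsSymm W]
  {P : Finset X} {ι : Type*} {y : ι → X} {ℓ : ι → ℝ}

lemma fRel_of_cutCovers (hW : W ∈ 𝓤 X) (hP : ∀ γ > 0, CutCovers W u P γ)
    (hPy : ∀ p ∈ P, ∃ i, u p ≤ ℓ i ∧ (p, y i) ∈ W) (hyu : ∀ i, ∃ x, ℓ i ≤ u x ∧ (x, y i) ∈ W)
    (hys : ∀ i, ℓ i ≤ s (y i)) (hsy : ∀ γ > 0, ∀ x, γ ≤ s x → ∃ i, γ ≤ ℓ i ∧ x ∈ closure {y i}) :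
    FRel (W ○ W ○ W) u s := by
  refine fRel_of_forall_pos hW fun γ hγ => ⟨fun x hx => ?_, fun x hx => ?_⟩
  · obtain ⟨p, ⟨hp, hγp⟩, hpx⟩ := hP γ hγ hx
    obtain ⟨i, hpi, hpy⟩ := hPy p hp
    exact ⟨y i, show γ ≤ s (y i) from hγp.trans (hpi.trans (hys i)), p, SetRel.symm W hpy, hpx⟩
  · obtain ⟨i, hγi, hxi⟩ := hsy γ hγ x hx
    obtain ⟨x', hix', hx'y⟩ := hyu i
    exact ⟨x', show γ ≤ u x' from hγi.trans hix', y i, hx'y,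
      mem_rel_of_mem_closure_singleton hW hxi⟩

end Approximation

lemma exists_mem_closure_of_le_zadeh_simpleFuzzy {X ι : Type*} [TopologicalSpace X] [Finite ι]
    {g : X → X} (hg : Continuous g) {z : ι → X} {ℓ : ι → ℝ} {γ : ℝ} (hγ : 0 < γ) {y : X}
    (h : γ ≤ zadeh g (simpleFuzzy z ℓ) y) : ∃ i, γ ≤ ℓ i ∧ y ∈ closure {g (z i)} := by
  obtain ⟨x, rfl, hx⟩ := exists_le_of_le_zadeh finite_range_simpleFuzzy hγ h
  obtain ⟨i, hi, hxi⟩ := (le_simpleFuzzy_iff hγ).1 hx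
  exact ⟨i, hi, specializes_iff_mem_closure.1 ((specializes_iff_mem_closure.2 hxi).map hg)⟩

def IsTopTransitive {Y : Type*} [TopologicalSpace Y] (g : Y → Y) : Prop :=
  ∀ A B : Set Y, IsOpen A → A.Nonempty → IsOpen B → B.Nonempty →
    ∃ n : ℕ, 0 < n ∧ (g^[n] '' A ∩ B).Nonempty

/-- Furstenberg's intersection lemma. -/
lemma hits_of_hits_inter_preimage {X : Type*} {f : X → X} {E F A B : Set X} {k n : ℕ}
    (h : (f^[n] '' (E ∩ f^[k] ⁻¹' A) ∩ (F ∩ f^[k] ⁻¹' B)).Nonempty) :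
    (f^[n] '' E ∩ F).Nonempty ∧ (f^[n] '' A ∩ B).Nonempty := by
  obtain ⟨_, ⟨x, ⟨hxE, hxA⟩, rfl⟩, hxF, hxB⟩ := h
  refine ⟨⟨_, mem_image_of_mem _ hxE, hxF⟩, ⟨f^[n] (f^[k] x), mem_image_of_mem _ hxA, ?_⟩⟩
  rwa [Function.Commute.iterate_iterate_self f n k x]

section Dynamics

variable {X : Type*} [TopologicalSpace X] {f : X → X}

lemma IsTopTransitive.exists_iterate_hits_pair (h : IsTopTransitive (Prod.map f f))
    {A B C D : Set X} (hA : IsOpen A) (hA' : A.Nonempty) (hB : IsOpen B) (hB' : B.Nonempty)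
    (hC : IsOpen C) (hC' : C.Nonempty) (hD : IsOpen D) (hD' : D.Nonempty) :
    ∃ n, 0 < n ∧ (f^[n] '' A ∩ C).Nonempty ∧ (f^[n] '' B ∩ D).Nonempty := by
  obtain ⟨n, hn, _, ⟨p, hp, rfl⟩, hpCD⟩ :=
    h (A ×ˢ B) (C ×ˢ D) (hA.prod hB) (hA'.prod hB') (hC.prod hD) (hC'.prod hD')
  rw [Prod.map_iterate] at hpCD
  exact ⟨n, hn, ⟨_, mem_image_of_mem _ hp.1, hpCD.1⟩, ⟨_, mem_image_of_mem _ hp.2, hpCD.2⟩⟩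

lemma IsTopTransitive.exists_iterate_hits_finset (hf : Continuous f)
    (h : IsTopTransitive (Prod.map f f)) {ι : Type*} {A B : ι → Set X}
    (hA : ∀ i, IsOpen (A i)) (hA' : ∀ i, (A i).Nonempty)
    (hB : ∀ i, IsOpen (B i)) (hB' : ∀ i, (B i).Nonempty) (s : Finset ι) :
    ∀ E F : Set X, IsOpen E → E.Nonempty → IsOpen F → F.Nonempty →
      ∃ n, 0 < n ∧ (f^[n] '' E ∩ F).Nonempty ∧ ∀ i ∈ s, (f^[n] '' A i ∩ B i).Nonempty := by
  classical
  induction s using Finset.induction_on with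
  | empty =>
    intro E F hE hE' hF hF'
    obtain ⟨n, hn, hEF, -⟩ := h.exists_iterate_hits_pair hE hE' hE hE' hF hF' hF hF'
    exact ⟨n, hn, hEF, by simp⟩
  | insert j s _ ih =>
    intro E F hE hE' hF hF'
    obtain ⟨k, -, ⟨_, ⟨a, ha, rfl⟩, hka⟩, ⟨_, ⟨b, hb, rfl⟩, hkb⟩⟩ :=
      h.exists_iterate_hits_pair hE hE' hF hF' (hA j) (hA' j) (hB j) (hB' j)
    obtain ⟨n, hn, hEF, hs⟩ := ih (E ∩ f^[k] ⁻¹' A j) (F ∩ f^[k] ⁻¹' B j)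
      (hE.inter ((hA j).preimage (hf.iterate k))) ⟨a, ha, hka⟩
      (hF.inter ((hB j).preimage (hf.iterate k))) ⟨b, hb, hkb⟩
    obtain ⟨hEF', hAB⟩ := hits_of_hits_inter_preimage hEF
    exact ⟨n, hn, hEF', (Finset.forall_mem_insert _ _ _).2 ⟨hAB, hs⟩⟩

lemma isTopTransitive_prodMap_of_hits_two (hf : Continuous f)
    (h : ∀ S T₁ T₂ : Set X, IsOpen S → S.Nonempty → IsOpen T₁ → T₁.Nonempty → IsOpen T₂ →
      T₂.Nonempty → ∃ n, 0 < n ∧ (f^[n] '' S ∩ T₁).Nonempty ∧ (f^[n] '' S ∩ T₂).Nonempty) :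
    IsTopTransitive (Prod.map f f) := by
  rintro A B hA ⟨⟨a₁, a₂⟩, ha⟩ hB ⟨⟨b₁, b₂⟩, hb⟩
  obtain ⟨A₁, A₂, hA₁, hA₂, ha₁, ha₂, hA₁₂⟩ := isOpen_prod_iff.1 hA a₁ a₂ ha
  obtain ⟨B₁, B₂, hB₁, hB₂, hb₁, hb₂, hB₁₂⟩ := isOpen_prod_iff.1 hB b₁ b₂ hb
  obtain ⟨k, -, ⟨_, ⟨x₁, hx₁, rfl⟩, hkx₁⟩, ⟨_, ⟨x₂, -, rfl⟩, hkx₂⟩⟩ :=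
    h A₁ A₂ B₂ hA₁ ⟨a₁, ha₁⟩ hA₂ ⟨a₂, ha₂⟩ hB₂ ⟨b₂, hb₂⟩
  obtain ⟨n, hn, ⟨_, ⟨x, hx, rfl⟩, hnx⟩, ⟨_, ⟨y, hy, rfl⟩, hny⟩⟩ :=
    h (A₁ ∩ f^[k] ⁻¹' A₂) B₁ (f^[k] ⁻¹' B₂) (hA₁.inter (hA₂.preimage (hf.iterate k)))
      ⟨x₁, hx₁, hkx₁⟩ hB₁ ⟨b₁, hb₁⟩ (hB₂.preimage (hf.iterate k)) ⟨x₂, hkx₂⟩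
  refine ⟨n, hn, (f^[n] x, f^[k] (f^[n] y)), ⟨(x, f^[k] y), hA₁₂ ⟨hx.1, hy.2⟩, ?_⟩,
    hB₁₂ ⟨hnx, hny⟩⟩
  rw [Prod.map_iterate, Prod.map_apply, Function.Commute.iterate_iterate_self f n k y]

end Dynamics

section Main

variable {X : Type*} [UniformSpace X] {f : X → X}

/-- The fuzzy set `w` takes the level `min (u p) (v q)` at a point near `p` that `g` sends
near `q`. -/
theorem exists_fRel_zadeh_of_forall_exists_rel [DecidableEq X] {g : X → X} (hg : Continuous g)
    {u v : X → ℝ}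
    (hu : IsFuzzySet u) (hv : IsFuzzySet v) {U V : Set (X × X)} [SetRel.IsSymm U]
    [SetRel.IsSymm V] (hU : U ∈ 𝓤 X) (hV : V ∈ 𝓤 X) {Pu Pv : Finset X}
    (hPu0 : ∀ p ∈ Pu, 0 < u p) (hPu : ∀ γ > 0, CutCovers U u Pu γ)
    (hPv0 : ∀ q ∈ Pv, 0 < v q) (hPv : ∀ γ > 0, CutCovers V v Pv γ) {xu xv : X}
    (hxu : u xu = 1) (hxv : v xv = 1)
    (hits : ∀ i ∈ insert xu Pu ×ˢ insert xv Pv, ∃ z, (i.1, z) ∈ U ∧ (i.2, g z) ∈ V) :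
    ∃ w : X → ℝ, IsFuzzySet w ∧ FRel (U ○ U ○ U) u w ∧ FRel (V ○ V ○ V) v (zadeh g w) := by
  set Q := insert xu Pu ×ˢ insert xv Pv
  choose z hzU hzV using fun i : Q => hits i.1 i.2
  set ℓ : Q → ℝ := fun i => min (u i.1.1) (v i.1.2)
  have hpos : ∀ i : Q, 0 < u i.1.1 ∧ 0 < v i.1.2 := fun i => by
    obtain ⟨hp, hq⟩ := Finset.mem_product.1 i.2
    rcases Finset.mem_insert.1 hp with hp | hp <;> rcases Finset.mem_insert.1 hq with hq | hq <;>
      simp_all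
  have hw : IsFuzzySet (simpleFuzzy z ℓ) := isFuzzySet_simpleFuzzy
    (fun i => ⟨lt_min (hpos i).1 (hpos i).2, (min_le_left _ _).trans (hu.mem_Icc _).2⟩)
    ⟨⟨(xu, xv), by simp [Q]⟩, by simp [ℓ, hxu, hxv]⟩
  refine ⟨_, hw, ?_, ?_⟩
  · refine fRel_of_cutCovers hU hPu (fun p hp => ?_) (fun i => ⟨i.1.1, min_le_left _ _, hzU i⟩)
      (fun i => le_simpleFuzzy_of_mem_closure (z := z) (ℓ := ℓ) (subset_closure rfl))
      fun γ hγ x => (le_simpleFuzzy_iff hγ).1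
    exact ⟨⟨(p, xv), by simp [Q, hp]⟩, le_min le_rfl (hxv ▸ (hu.mem_Icc p).2), hzU ⟨(p, xv), _⟩⟩
  · refine fRel_of_cutCovers hV hPv (y := g ∘ z) (fun q hq => ?_)
      (fun i => ⟨i.1.2, min_le_right _ _, hzV i⟩)
      (fun i => (le_simpleFuzzy_of_mem_closure (z := z) (ℓ := ℓ) (subset_closure rfl)).trans
        (le_zadeh_apply hw.bddAbove_range _))
      fun γ hγ y => exists_mem_closure_of_le_zadeh_simpleFuzzy hg hγ
    exact ⟨⟨(xu, q), by simp [Q, hq]⟩, le_min (hxu ▸ (hv.mem_Icc q).2) le_rfl, hzV ⟨(xu, q), _⟩⟩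

theorem exists_fRel_zadeh_iterate_of_isTopTransitive (hf : Continuous f)
    (hwm : IsTopTransitive (Prod.map f f)) {u v : X → ℝ} (hu : IsFuzzySet u) (hv : IsFuzzySet v)
    {U V : Set (X × X)} (hU : U ∈ 𝓤 X) (hV : V ∈ 𝓤 X) :
    ∃ n : ℕ, 0 < n ∧ ∃ w : X → ℝ, IsFuzzySet w ∧ FRel U u w ∧ FRel V v ((zadeh f)^[n] w) := by
  classical
  obtain ⟨U', hU', hU'o, hU's, hU'U⟩ := exists_isOpen_isSymm_comp_comp_subset hU
  obtain ⟨V', hV', hV'o, hV's, hV'V⟩ := exists_isOpen_isSymm_comp_comp_subset hV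
  obtain ⟨Pu, hPu0, hPu⟩ := exists_finset_cutCovers hu.compact_supp hU' hU'o hu.usc
    fun x => (hu.mem_Icc x).2
  obtain ⟨Pv, hPv0, hPv⟩ := exists_finset_cutCovers hv.compact_supp hV' hV'o hv.usc
    fun x => (hv.mem_Icc x).2
  obtain ⟨xu, hxu⟩ := hu.normal
  obtain ⟨xv, hxv⟩ := hv.normal
  obtain ⟨n, hn, -, hits⟩ := hwm.exists_iterate_hits_finset hf
    (A := fun i : X × X => ball i.1 U') (B := fun i => ball i.2 V')
    (fun i => isOpen_ball _ hU'o) (fun i => ⟨i.1, refl_mem_uniformity hU'⟩)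
    (fun i => isOpen_ball _ hV'o) (fun i => ⟨i.2, refl_mem_uniformity hV'⟩)
    (insert xu Pu ×ˢ insert xv Pv) univ univ isOpen_univ ⟨xu, trivial⟩ isOpen_univ ⟨xu, trivial⟩
  obtain ⟨w, hw, hFu, hFv⟩ := exists_fRel_zadeh_of_forall_exists_rel (hf.iterate n) hu hv hU' hV'
    hPu0 hPu hPv0 hPv hxu hxv fun i hi => by
      obtain ⟨_, ⟨z, hz, rfl⟩, hfz⟩ := hits i hi
      exact ⟨z, hz, hfz⟩
  refine ⟨n, hn, w, hw, hFu.mono hU'U, ?_⟩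
  rw [zadeh_iterate (fun x => (hw.mem_Icc x).1) hw.bddAbove_range]
  exact hFv.mono hV'V

lemma exists_rel_of_fRel_zadeh {g : X → X} {u v w : X → ℝ} {U V : Set (X × X)}
    (hw1 : ∀ x, w x ≤ 1) (hFu : FRel U u w) (hFv : FRel V v (zadeh g w)) {b : X} (hb : 1 ≤ v b) :
    ∃ x p, 0 < u p ∧ (p, x) ∈ U ∧ (g x, b) ∈ V := by
  obtain ⟨q, hq, hqb⟩ := (hFv 1 ⟨zero_le_one, le_rfl⟩).1
    (by rw [fuzzyCut_of_ne_zero v one_ne_zero]; exact hb)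
  rw [fuzzyCut_of_ne_zero _ one_ne_zero] at hq
  obtain ⟨x, rfl, hx⟩ := exists_lt_of_lt_zadeh (β := 0) le_rfl (zero_lt_one.trans_le hq)
  obtain ⟨p, hp, hpx⟩ := (hFu (w x) ⟨hx.le, hw1 x⟩).2
    (by rw [fuzzyCut_of_ne_zero w hx.ne']; exact show w x ≤ w x from le_rfl)
  rw [fuzzyCut_of_ne_zero u hx.ne'] at hp
  exact ⟨x, p, hx.trans_le hp, hpx, hqb⟩

/-- Test the transitivity of the Zadeh extension on the crisp point `a` and the crisp pair
`{b₁, b₂}`. -/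
theorem hits_two_of_zadeh
    (H : ∀ u v : X → ℝ, IsFuzzySet u → IsFuzzySet v → ∀ U ∈ 𝓤 X, ∀ V ∈ 𝓤 X,
      ∃ n : ℕ, 0 < n ∧ ∃ w : X → ℝ, IsFuzzySet w ∧ FRel U u w ∧ FRel V v ((zadeh f)^[n] w))
    {S T₁ T₂ : Set X} (hS : IsOpen S) (hS' : S.Nonempty) (hT₁ : IsOpen T₁) (hT₁' : T₁.Nonempty)
    (hT₂ : IsOpen T₂) (hT₂' : T₂.Nonempty) :
    ∃ n, 0 < n ∧ (f^[n] '' S ∩ T₁).Nonempty ∧ (f^[n] '' S ∩ T₂).Nonempty := by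
  obtain ⟨a, ha⟩ := hS'
  obtain ⟨b₁, hb₁⟩ := hT₁'
  obtain ⟨b₂, hb₂⟩ := hT₂'
  obtain ⟨U, hU, hUS⟩ := comp_mem_uniformity_sets (mem_nhds_uniformity_iff_right.1 (hS.mem_nhds ha))
  set V := {p : X × X | p.2 = b₁ → p.1 ∈ T₁} ∩ {p | p.2 = b₂ → p.1 ∈ T₂}
  have hV : V ∈ 𝓤 X := inter_mem (mem_nhds_uniformity_iff_left.1 (hT₁.mem_nhds hb₁))
    (mem_nhds_uniformity_iff_left.1 (hT₂.mem_nhds hb₂))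
  obtain ⟨n, hn, w, hw, hFu, hFv⟩ := H (simpleFuzzy (fun _ : Unit => a) fun _ => 1)
    (simpleFuzzy ![b₁, b₂] fun _ => 1) (isFuzzySet_simpleFuzzy (by simp) ⟨(), rfl⟩)
    (isFuzzySet_simpleFuzzy (by simp) ⟨0, rfl⟩) U hU V hV
  rw [zadeh_iterate (fun x => (hw.mem_Icc x).1) hw.bddAbove_range] at hFv
  have hit : ∀ j, ∃ x ∈ S, (f^[n] x, ![b₁, b₂] j) ∈ V := fun j => by
    obtain ⟨x, p, hp, hpx, hxb⟩ := exists_rel_of_fRel_zadeh (fun x => (hw.mem_Icc x).2) hFu hFv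
      (le_simpleFuzzy_of_mem_closure (ℓ := fun _ => 1) (i := j) (subset_closure rfl))
    obtain ⟨_, -, hap⟩ := (le_simpleFuzzy_iff hp).1 le_rfl
    exact ⟨x, hUS (show (a, x) ∈ U ○ U from ⟨p, mem_rel_of_mem_closure_singleton hU hap, hpx⟩) rfl,
      hxb⟩
  obtain ⟨x₁, hx₁, hfx₁⟩ := hit 0
  obtain ⟨x₂, hx₂, hfx₂⟩ := hit 1
  exact ⟨n, hn, ⟨_, mem_image_of_mem _ hx₁, hfx₁.1 rfl⟩, ⟨_, mem_image_of_mem _ hx₂, hfx₂.2 rfl⟩⟩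

end Main

/-- `f` is weakly mixing (`f × f` is transitive on `X × X`) if and only if the Zadeh
extension is topologically transitive on `(ℱ(X), 𝒰_∞)` (stated via basic level-wise
balls). -/
theorem stmt17 {X : Type*} [UniformSpace X] {f : X → X} (hf : Continuous f) :
    (∀ A B : Set (X × X), IsOpen A → A.Nonempty → IsOpen B → B.Nonempty →
      ∃ n : ℕ, 0 < n ∧ ((Prod.map f f)^[n] '' A ∩ B).Nonempty) ↔
    (∀ u v : X → ℝ, IsFuzzySet u → IsFuzzySet v → ∀ U ∈ 𝓤 X, ∀ V ∈ 𝓤 X,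
      ∃ n : ℕ, 0 < n ∧ ∃ w : X → ℝ, IsFuzzySet w ∧ FRel U u w ∧
        FRel V v ((zadeh f)^[n] w)) :=
  ⟨fun hwm _ _ hu hv _ hU _ hV => exists_fRel_zadeh_iterate_of_isTopTransitive hf hwm hu hv hU hV,
    fun H => isTopTransitive_prodMap_of_hits_two hf fun _ _ _ hS hS' hT₁ hT₁' hT₂ hT₂' =>
      hits_two_of_zadeh H hS hS' hT₁ hT₁' hT₂ hT₂'⟩
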